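/- arXiv:2309.12567 — 3 statements merged into one kernel-verified Lean document; each statement's English description precedes it below -/
import Mathlib

section
/- Let f(z,σ) = g(|z|²/4, σ) for a C² function g : ℝ × ℝ^k → ℝ. Then at every point (z,σ), with ξ = |z|²/4, the horizontal ∞-Laplacian satisfies Δ_{H,∞} f(z,σ) = ξ²·Δ_∞ g(ξ,σ) + (ξ/2)·g_ξ(ξ,σ)·|∇g(ξ,σ)|², where ∇g = (g_ξ, ∇_σ g) and Δ_∞ g = (1/2)⟨∇(|∇g|²), ∇g⟩ is the Euclidean ∞-Laplacian of g on ℝ × ℝ^k. -/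
open scoped BigOperators
open Matrix

noncomputable section

variable {m k : ℕ}

/-- The ambient point space ℝ^m × ℝ^k. -/
abbrev Pt (m k : ℕ) := EuclideanSpace ℝ (Fin m) × EuclideanSpace ℝ (Fin k)

/-- H-type (Clifford) condition on the matrices J_ℓ : skew-symmetry and
    J_ℓ J_{ℓ'} + J_{ℓ'} J_ℓ = -2 δ_{ℓℓ'} Id. -/
def HType (J : Fin k → Matrix (Fin m) (Fin m) ℝ) : Prop :=
  (∀ ℓ, (J ℓ)ᵀ = -(J ℓ)) ∧
  ∀ ℓ ℓ', J ℓ * J ℓ' + J ℓ' * J ℓ =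
    (if ℓ = ℓ' then (-2 : ℝ) else 0) • (1 : Matrix (Fin m) (Fin m) ℝ)

/-- Horizontal derivative X_i f(z,σ) = ∂_{z_i} f + (1/2) Σ_ℓ (J_ℓ z)_i ∂_{σ_ℓ} f. -/
def XD (J : Fin k → Matrix (Fin m) (Fin m) ℝ) (f : Pt m k → ℝ) (i : Fin m) (x : Pt m k) : ℝ :=
  fderiv ℝ f x (EuclideanSpace.single i 1, 0)
    + (1/2) * ∑ ℓ : Fin k, (∑ j : Fin m, J ℓ i j * x.1 j) *
        fderiv ℝ f x (0, EuclideanSpace.single ℓ 1)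

/-- Squared length of the horizontal gradient. -/
def hGradSq (J : Fin k → Matrix (Fin m) (Fin m) ℝ) (f : Pt m k → ℝ) (x : Pt m k) : ℝ :=
  ∑ i : Fin m, (XD J f i x) ^ 2

/-- Length of the horizontal gradient. -/
def hGradNorm (J : Fin k → Matrix (Fin m) (Fin m) ℝ) (f : Pt m k → ℝ) (x : Pt m k) : ℝ :=
  Real.sqrt (hGradSq J f x)

/-- Horizontal Laplacian Δ_H f = Σ X_i(X_i f). -/
def hLap (J : Fin k → Matrix (Fin m) (Fin m) ℝ) (f : Pt m k → ℝ) (x : Pt m k) : ℝ :=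
  ∑ i : Fin m, XD J (XD J f i) i x

/-- Horizontal ∞-Laplacian Δ_{H,∞} f = (1/2) Σ X_i(|∇_H f|²) X_i f. -/
def hInfLap (J : Fin k → Matrix (Fin m) (Fin m) ℝ) (f : Pt m k → ℝ) (x : Pt m k) : ℝ :=
  (1/2) * ∑ i : Fin m, XD J (hGradSq J f) i x * XD J f i x

/-- Horizontal p-Laplacian Δ_{H,p} f = Σ X_i(|∇_H f|^{p-2} X_i f). -/
def hPLap (J : Fin k → Matrix (Fin m) (Fin m) ℝ) (p : ℝ) (f : Pt m k → ℝ) (x : Pt m k) : ℝ :=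
  ∑ i : Fin m, XD J (fun y => (hGradSq J f y) ^ ((p - 2) / 2) * XD J f i y) i x

/-- Korányi gauge N(z,σ) = (|z|⁴ + 16|σ|²)^{1/4}. -/
def gaugeN (x : Pt m k) : ℝ := (‖x.1‖ ^ 4 + 16 * ‖x.2‖ ^ 2) ^ ((1 : ℝ)/4)

/-- ∂_ξ g for g : ℝ × ℝ^k → ℝ. -/
def gXi (g : ℝ × EuclideanSpace ℝ (Fin k) → ℝ) (y : ℝ × EuclideanSpace ℝ (Fin k)) : ℝ :=
  fderiv ℝ g y (1, 0)

/-- ∂_{σ_ℓ} g for g : ℝ × ℝ^k → ℝ. -/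
def gS (g : ℝ × EuclideanSpace ℝ (Fin k) → ℝ) (ℓ : Fin k) (y : ℝ × EuclideanSpace ℝ (Fin k)) : ℝ :=
  fderiv ℝ g y (0, EuclideanSpace.single ℓ 1)

/-- |∇ g|² = g_ξ² + |∇_σ g|². -/
def gGradSq (g : ℝ × EuclideanSpace ℝ (Fin k) → ℝ) (y : ℝ × EuclideanSpace ℝ (Fin k)) : ℝ :=
  (gXi g y) ^ 2 + ∑ ℓ : Fin k, (gS g ℓ y) ^ 2

/-- g_{ξξ}. -/
def gXiXi (g : ℝ × EuclideanSpace ℝ (Fin k) → ℝ) (y : ℝ × EuclideanSpace ℝ (Fin k)) : ℝ :=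
  fderiv ℝ (gXi g) y (1, 0)

/-- Δ_σ g. -/
def gLapS (g : ℝ × EuclideanSpace ℝ (Fin k) → ℝ) (y : ℝ × EuclideanSpace ℝ (Fin k)) : ℝ :=
  ∑ ℓ : Fin k, fderiv ℝ (gS g ℓ) y (0, EuclideanSpace.single ℓ 1)

/-- Euclidean ∞-Laplacian Δ_∞ g = (1/2)⟨∇(|∇g|²), ∇g⟩ on ℝ × ℝ^k. -/
def gInf (g : ℝ × EuclideanSpace ℝ (Fin k) → ℝ) (y : ℝ × EuclideanSpace ℝ (Fin k)) : ℝ :=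
  (1/2) * (fderiv ℝ (gGradSq g) y (1, 0) * gXi g y
    + ∑ ℓ : Fin k, fderiv ℝ (gGradSq g) y (0, EuclideanSpace.single ℓ 1) * gS g ℓ y)

/-!
Write `ξ = |z|²/4`. By the chain rule, the horizontal gradient of `u(ξ, σ)` is
`½ (u_ξ z + Σ_ℓ u_{σ_ℓ} J_ℓ z)`, and the Clifford relations make `z, J_1 z, …, J_k z` pairwise
orthogonal of length `|z|`. Hence `⟨∇_H u, ∇_H v⟩ = ξ ⟨∇u, ∇v⟩` for partially symmetric `u, v`.
In particular `|∇_H f|²` is partially symmetric with profile `ξ |∇g|²`, so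
`Δ_{H,∞} f = ½ ξ ⟨∇(ξ |∇g|²), ∇g⟩`, and the product rule expands this into the formula.
-/

section SkewSymmetric

variable {n : Type*} [Fintype n]

theorem mulVec_dotProduct_mulVec_of_transpose_eq_neg {J : Matrix n n ℝ} (hJ : Jᵀ = -J)
    (A : Matrix n n ℝ) (z : n → ℝ) : (J *ᵥ z) ⬝ᵥ (A *ᵥ z) = -(z ⬝ᵥ ((J * A) *ᵥ z)) := by
  rw [← vecMul_transpose, ← dotProduct_mulVec, mulVec_mulVec, hJ, neg_mul, neg_mulVec,
    dotProduct_neg]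

theorem dotProduct_mulVec_self_of_transpose_eq_neg {J : Matrix n n ℝ} (hJ : Jᵀ = -J)
    (z : n → ℝ) : z ⬝ᵥ (J *ᵥ z) = 0 := by
  have h : z ⬝ᵥ (J *ᵥ z) = -(z ⬝ᵥ (J *ᵥ z)) := by
    conv_lhs => rw [dotProduct_mulVec, ← mulVec_transpose, hJ, neg_mulVec, neg_dotProduct,
      dotProduct_comm]
  linarith

theorem mulVec_dotProduct_mulVec_of_anticomm [DecidableEq n] {J J' : Matrix n n ℝ}
    (hJ : Jᵀ = -J) (hJ' : J'ᵀ = -J') {c : ℝ} (hc : J * J' + J' * J = c • 1) (z : n → ℝ) :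
    (J *ᵥ z) ⬝ᵥ (J' *ᵥ z) = -(c / 2) * (z ⬝ᵥ z) := by
  have h := mulVec_dotProduct_mulVec_of_transpose_eq_neg hJ J' z
  have h' := mulVec_dotProduct_mulVec_of_transpose_eq_neg hJ' J z
  have hsum : z ⬝ᵥ ((J * J') *ᵥ z) + z ⬝ᵥ ((J' * J) *ᵥ z) = c * (z ⬝ᵥ z) := by
    rw [← dotProduct_add, ← add_mulVec, hc, smul_mulVec, one_mulVec, dotProduct_smul, smul_eq_mul]
  rw [dotProduct_comm] at h'
  linarith

theorem norm_sq_eq_ofLp_dotProduct (z : EuclideanSpace ℝ n) : ‖z‖ ^ 2 = z.ofLp ⬝ᵥ z.ofLp := by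
  rw [← real_inner_self_eq_norm_sq, EuclideanSpace.inner_eq_star_dotProduct, star_trivial]

end SkewSymmetric

def cliffordCombo (J : Fin k → Matrix (Fin m) (Fin m) ℝ) (z : Fin m → ℝ) (a : ℝ)
    (b : Fin k → ℝ) : Fin m → ℝ :=
  a • z + ∑ ℓ, b ℓ • (J ℓ *ᵥ z)

theorem HType.mulVec_dotProduct_mulVec {J : Fin k → Matrix (Fin m) (Fin m) ℝ} (hJ : HType J)
    (z : Fin m → ℝ) (ℓ ℓ' : Fin k) :
    (J ℓ *ᵥ z) ⬝ᵥ (J ℓ' *ᵥ z) = if ℓ = ℓ' then z ⬝ᵥ z else 0 := by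
  rw [mulVec_dotProduct_mulVec_of_anticomm (hJ.1 ℓ) (hJ.1 ℓ') (hJ.2 ℓ ℓ')]
  split_ifs <;> ring

theorem HType.cliffordCombo_dotProduct {J : Fin k → Matrix (Fin m) (Fin m) ℝ} (hJ : HType J)
    (z : Fin m → ℝ) (a c : ℝ) (b d : Fin k → ℝ) :
    cliffordCombo J z a b ⬝ᵥ cliffordCombo J z c d = (a * c + b ⬝ᵥ d) * (z ⬝ᵥ z) := by
  have hz : ∀ ℓ, z ⬝ᵥ (J ℓ *ᵥ z) = 0 := fun ℓ =>
    dotProduct_mulVec_self_of_transpose_eq_neg (hJ.1 ℓ) z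
  have hz' : ∀ ℓ, (J ℓ *ᵥ z) ⬝ᵥ z = 0 := fun ℓ => by rw [dotProduct_comm, hz]
  simp only [cliffordCombo, add_dotProduct, dotProduct_add, smul_dotProduct, dotProduct_smul,
    sum_dotProduct, dotProduct_sum, hz, hz', hJ.mulVec_dotProduct_mulVec, smul_eq_mul]
  simp only [mul_zero, Finset.sum_const_zero, add_zero, zero_add, mul_ite, Finset.sum_ite_eq',
    Finset.mem_univ, if_true]
  generalize z ⬝ᵥ z = s
  rw [add_mul, dotProduct, Finset.sum_mul]
  congr 1
  · ring
  · exact Finset.sum_congr rfl fun _ _ => by ring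

def toXiSigma (p : Pt m k) : ℝ × EuclideanSpace ℝ (Fin k) := (‖p.1‖ ^ 2 / 4, p.2)

theorem differentiable_toXiSigma : Differentiable ℝ (toXiSigma (m := m) (k := k)) := by
  unfold toXiSigma
  have : Differentiable ℝ fun p : Pt m k => ‖p.1‖ ^ 2 := differentiable_fst.norm_sq ℝ
  fun_prop

theorem fderiv_toXiSigma_apply (x v : Pt m k) :
    fderiv ℝ toXiSigma x v = (inner ℝ x.1 v.1 / 2, v.2) := by
  have hξ := (hasFDerivAt_fst (p := x)).norm_sq.mul_const (1 / 4 : ℝ)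
  have hφ : toXiSigma = fun p : Pt m k => (‖p.1‖ ^ 2 * (1 / 4), p.2) := by
    funext p
    rw [toXiSigma, div_eq_mul_one_div]
  rw [hφ, (hξ.prodMk hasFDerivAt_snd).fderiv]
  simp only [ContinuousLinearMap.prod_apply, _root_.smul_apply, ContinuousLinearMap.comp_apply,
    ContinuousLinearMap.coe_fst', coe_innerSL_apply, nsmul_eq_mul, Nat.cast_ofNat, smul_eq_mul,
    ContinuousLinearMap.coe_snd', Prod.mk.injEq, and_true]
  ring

theorem fderiv_comp_toXiSigma_apply {h : ℝ × EuclideanSpace ℝ (Fin k) → ℝ} {x : Pt m k}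
    (hh : DifferentiableAt ℝ h (toXiSigma x)) (v : Pt m k) :
    fderiv ℝ (h ∘ toXiSigma) x v = fderiv ℝ h (toXiSigma x) (inner ℝ x.1 v.1 / 2, v.2) := by
  rw [fderiv_comp x hh (differentiable_toXiSigma x), ContinuousLinearMap.comp_apply,
    fderiv_toXiSigma_apply]

theorem XD_comp_toXiSigma (J : Fin k → Matrix (Fin m) (Fin m) ℝ)
    {h : ℝ × EuclideanSpace ℝ (Fin k) → ℝ} {x : Pt m k}
    (hh : DifferentiableAt ℝ h (toXiSigma x)) (i : Fin m) :
    XD J (h ∘ toXiSigma) i x = (1 / 2) *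
      cliffordCombo J x.1 (gXi h (toXiSigma x)) (fun ℓ => gS h ℓ (toXiSigma x)) i := by
  have hξ (c : ℝ) : fderiv ℝ h (toXiSigma x) (c, 0) = c * gXi h (toXiSigma x) := by
    rw [gXi, ← smul_eq_mul, ← map_smul, Prod.smul_mk, smul_eq_mul, mul_one, smul_zero]
  simp only [XD, gS, fderiv_comp_toXiSigma_apply hh, EuclideanSpace.inner_single_right,
    inner_zero_right, zero_div, hξ, cliffordCombo, Pi.add_apply, Pi.smul_apply, Finset.sum_apply,
    smul_eq_mul, conj_trivial, one_mul]
  rw [mul_add, Finset.mul_sum, Finset.mul_sum]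
  congr 1
  · ring
  · exact Finset.sum_congr rfl fun ℓ _ => by simp only [mulVec, dotProduct]; ring

def gGradInner (u v : ℝ × EuclideanSpace ℝ (Fin k) → ℝ) (y : ℝ × EuclideanSpace ℝ (Fin k)) : ℝ :=
  gXi u y * gXi v y + ∑ ℓ, gS u ℓ y * gS v ℓ y

theorem gGradInner_self (u : ℝ × EuclideanSpace ℝ (Fin k) → ℝ) : gGradInner u u = gGradSq u := by
  funext y
  simp only [gGradInner, gGradSq, sq]

theorem gInf_eq_gGradInner (g : ℝ × EuclideanSpace ℝ (Fin k) → ℝ)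
    (y : ℝ × EuclideanSpace ℝ (Fin k)) : gInf g y = 1 / 2 * gGradInner (gGradSq g) g y :=
  rfl

theorem gGradInner_fst_mul {G : ℝ × EuclideanSpace ℝ (Fin k) → ℝ}
    {y : ℝ × EuclideanSpace ℝ (Fin k)} (hG : DifferentiableAt ℝ G y)
    (v : ℝ × EuclideanSpace ℝ (Fin k) → ℝ) :
    gGradInner (fun w => w.1 * G w) v y = gXi v y * G y + y.1 * gGradInner G v y := by
  have hprod (d : ℝ × EuclideanSpace ℝ (Fin k)) :
      fderiv ℝ (fun w => w.1 * G w) y d = d.1 * G y + y.1 * fderiv ℝ G y d := by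
    rw [fderiv_fun_mul differentiableAt_fst hG, fderiv_fst]
    simp only [_root_.add_apply, _root_.smul_apply, smul_eq_mul, ContinuousLinearMap.coe_fst']
    ring
  simp only [gGradInner, gXi, gS, hprod, zero_mul, zero_add, one_mul, mul_assoc, ← Finset.mul_sum]
  ring

theorem HType.sum_XD_mul_XD_comp_toXiSigma {J : Fin k → Matrix (Fin m) (Fin m) ℝ} (hJ : HType J)
    {u v : ℝ × EuclideanSpace ℝ (Fin k) → ℝ} {x : Pt m k}
    (hu : DifferentiableAt ℝ u (toXiSigma x)) (hv : DifferentiableAt ℝ v (toXiSigma x)) :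
    ∑ i, XD J (u ∘ toXiSigma) i x * XD J (v ∘ toXiSigma) i x
      = (toXiSigma x).1 * gGradInner u v (toXiSigma x) := by
  simp only [XD_comp_toXiSigma J hu, XD_comp_toXiSigma J hv]
  calc _ = 1 / 4 * (cliffordCombo J x.1 (gXi u (toXiSigma x)) (fun ℓ => gS u ℓ (toXiSigma x))
          ⬝ᵥ cliffordCombo J x.1 (gXi v (toXiSigma x)) (fun ℓ => gS v ℓ (toXiSigma x))) := by
        rw [dotProduct, Finset.mul_sum]
        exact Finset.sum_congr rfl fun i _ => by ring
    _ = _ := by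
        rw [hJ.cliffordCombo_dotProduct, ← norm_sq_eq_ofLp_dotProduct, toXiSigma, gGradInner,
          dotProduct]
        ring

theorem HType.hGradSq_comp_toXiSigma {J : Fin k → Matrix (Fin m) (Fin m) ℝ} (hJ : HType J)
    {g : ℝ × EuclideanSpace ℝ (Fin k) → ℝ} (hg : Differentiable ℝ g) :
    hGradSq J (g ∘ toXiSigma) = (fun y => y.1 * gGradSq g y) ∘ toXiSigma := by
  funext x
  simp only [hGradSq, sq, hJ.sum_XD_mul_XD_comp_toXiSigma (hg _) (hg _), gGradInner_self,
    Function.comp_apply]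

theorem ContDiff.gGradSq {n : WithTop ℕ∞} {g : ℝ × EuclideanSpace ℝ (Fin k) → ℝ}
    (hg : ContDiff ℝ (n + 1) g) : ContDiff ℝ n (gGradSq g) := by
  have hd : ContDiff ℝ n (fderiv ℝ g) := hg.fderiv_right le_rfl
  exact ((hd.clm_apply contDiff_const).pow 2).add
    (ContDiff.sum fun ℓ _ => (hd.clm_apply contDiff_const).pow 2)

theorem horizontal_infinity_laplacian_of_partial_symmetry_general
    (J : Fin k → Matrix (Fin m) (Fin m) ℝ) (hJ : HType J)
    (g : ℝ × EuclideanSpace ℝ (Fin k) → ℝ) (hg : ContDiff ℝ 2 g)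
    (f : Pt m k → ℝ) (hf : ∀ x : Pt m k, f x = g (‖x.1‖ ^ 2 / 4, x.2))
    (x : Pt m k) :
    hInfLap J f x =
      (‖x.1‖ ^ 2 / 4) ^ 2 * gInf g (‖x.1‖ ^ 2 / 4, x.2)
        + ((‖x.1‖ ^ 2 / 4) / 2) * gXi g (‖x.1‖ ^ 2 / 4, x.2) * gGradSq g (‖x.1‖ ^ 2 / 4, x.2) := by
  obtain rfl : f = g ∘ toXiSigma := funext hf
  have hg1 : Differentiable ℝ g := hg.differentiable (by norm_num)
  have hG : Differentiable ℝ (gGradSq g) := (hg.gGradSq (n := 1)).differentiable one_ne_zero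
  have hH : Differentiable ℝ fun y : ℝ × EuclideanSpace ℝ (Fin k) => y.1 * gGradSq g y :=
    differentiable_fst.mul hG
  rw [hInfLap, hJ.hGradSq_comp_toXiSigma hg1, hJ.sum_XD_mul_XD_comp_toXiSigma (hH _) (hg1 _),
    gGradInner_fst_mul (hG _), gInf_eq_gGradInner, toXiSigma]
  ring

/-- for f(z,σ) = g(|z|²/4, σ) with g of class C², with ξ = |z|²/4 one has
Δ_{H,∞} f = ξ²·Δ_∞ g + (ξ/2)·g_ξ·|∇g|². -/
theorem horizontal_infinity_laplacian_of_partial_symmetry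
    (hm : 1 ≤ m) (hk : 1 ≤ k)
    (J : Fin k → Matrix (Fin m) (Fin m) ℝ) (hJ : HType J)
    (g : ℝ × EuclideanSpace ℝ (Fin k) → ℝ) (hg : ContDiff ℝ 2 g)
    (f : Pt m k → ℝ) (hf : ∀ x : Pt m k, f x = g (‖x.1‖ ^ 2 / 4, x.2))
    (x : Pt m k) :
    hInfLap J f x =
      (‖x.1‖ ^ 2 / 4) ^ 2 * gInf g (‖x.1‖ ^ 2 / 4, x.2)
        + ((‖x.1‖ ^ 2 / 4) / 2) * gXi g (‖x.1‖ ^ 2 / 4, x.2) * gGradSq g (‖x.1‖ ^ 2 / 4, x.2) :=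
  horizontal_infinity_laplacian_of_partial_symmetry_general J hJ g hg f hf x

end
end

section
/- Let 1 < p < ∞ and let f(z,σ) = g(|z|²/4, σ) for a C² function g : ℝ × ℝ^k → ℝ. Then at every point (z,σ) with z ≠ 0 and ∇g(ξ,σ) ≠ 0, where ξ = |z|²/4, the horizontal p-Laplacian is given by Δ_{H,p} f(z,σ) = ξ^{p/2} |∇g|^{p−2} [ g_{ξξ} + ((m+p−2)/(2ξ)) g_ξ + Δ_σ g + (p−2) Δ_∞ g / |∇g|² ], where all quantities involving g are evaluated at (ξ,σ), ∇g = (g_ξ, ∇_σ g), and Δ_∞ g = (1/2)⟨∇(|∇g|²), ∇g⟩. -/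
open scoped BigOperators
open Matrix

noncomputable section

variable {m k : ℕ}

/-!
Write `f = g ∘ Φ` with `Φ (z, σ) = (|z|²/4, σ)` (`xiSigma`). By the chain rule
`X_i f = (z_i/2) g_ξ + (1/2) Σ_ℓ (J_ℓ z)_i ∂_{σ_ℓ} g`, i.e. `∇_H f` is the image of `∇g` under
`(a, b) ↦ (a/2) z + (1/2) Σ_ℓ b_ℓ J_ℓ z`. The H-type relations make `z, J_1 z, …, J_k z` pairwise
orthogonal of length `|z|`, so this map multiplies inner products by `ξ = |z|²/4`; in particular
`|∇_H f|² = ξ |∇g|²`. Expanding `Δ_{H,p} f = |∇_H f|^{p-2} (Δ_H f + (p-2) Δ_{H,∞} f / |∇_H f|²)`,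
the same orthogonality (together with `(J_ℓ)_{ii} = 0`) gives
`Δ_H f = (m/2) g_ξ + ξ (g_ξξ + Δ_σ g)` and `Δ_{H,∞} f = ξ (|∇g|² g_ξ / 2 + ξ Δ_∞ g)`.
-/

lemma dotProduct_mulVec_self_eq_zero_of_transpose_eq_neg {n : Type*} [Fintype n]
    {A : Matrix n n ℝ} (hA : Aᵀ = -A) (v : n → ℝ) : v ⬝ᵥ A *ᵥ v = 0 := by
  have h := dotProduct_mulVec v A v
  rw [← mulVec_transpose, hA, neg_mulVec, neg_dotProduct, dotProduct_comm (A *ᵥ v)] at h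
  linarith

lemma mulVec_dotProduct_mulVec {n : Type*} [Fintype n] (A B : Matrix n n ℝ) (v : n → ℝ) :
    A *ᵥ v ⬝ᵥ B *ᵥ v = v ⬝ᵥ (Aᵀ * B) *ᵥ v := by
  rw [dotProduct_mulVec v, ← vecMul_vecMul, vecMul_transpose, dotProduct_mulVec]

lemma mulVec_dotProduct_mulVec_of_hType {J : Fin k → Matrix (Fin m) (Fin m) ℝ} (hJ : HType J)
    (v : Fin m → ℝ) (ℓ ℓ' : Fin k) :
    J ℓ *ᵥ v ⬝ᵥ J ℓ' *ᵥ v = if ℓ = ℓ' then v ⬝ᵥ v else 0 := by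
  have h : 2 * (J ℓ *ᵥ v ⬝ᵥ J ℓ' *ᵥ v) = -(v ⬝ᵥ (J ℓ * J ℓ' + J ℓ' * J ℓ) *ᵥ v) := by
    rw [two_mul]
    nth_rw 2 [dotProduct_comm]
    rw [mulVec_dotProduct_mulVec, mulVec_dotProduct_mulVec, hJ.1, hJ.1, ← dotProduct_add,
      ← add_mulVec, ← dotProduct_neg, ← neg_mulVec]
    simp only [neg_mul, neg_add]
  rw [hJ.2, smul_mulVec, one_mulVec, dotProduct_smul, smul_eq_mul] at h
  split_ifs at h ⊢ <;> linarith

lemma dotProduct_self_eq_norm_sq (z : EuclideanSpace ℝ (Fin m)) :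
    (z : Fin m → ℝ) ⬝ᵥ z = ‖z‖ ^ 2 := by
  rw [← real_inner_self_eq_norm_sq, EuclideanSpace.inner_eq_star_dotProduct]
  simp

/-- The horizontal gradient of `u ∘ xiSigma` at `(z, σ)` is `hLift J z (∂_ξ u) (∇_σ u)`. -/
def hLift (J : Fin k → Matrix (Fin m) (Fin m) ℝ) (z : Fin m → ℝ) (a : ℝ) (b : Fin k → ℝ) :
    Fin m → ℝ :=
  (a / 2) • z + (1 / 2 : ℝ) • ∑ ℓ, b ℓ • J ℓ *ᵥ z

lemma hLift_apply (J : Fin k → Matrix (Fin m) (Fin m) ℝ) (z : Fin m → ℝ) (a : ℝ)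
    (b : Fin k → ℝ) (i : Fin m) :
    hLift J z a b i = z i / 2 * a + 1 / 2 * ∑ ℓ, (∑ j, J ℓ i j * z j) * b ℓ := by
  simp only [hLift, Pi.add_apply, Pi.smul_apply, Finset.sum_apply, smul_eq_mul]
  simp only [mulVec, dotProduct, mul_comm (b _)]
  ring

lemma hLift_dotProduct_self {J : Fin k → Matrix (Fin m) (Fin m) ℝ} (hJ : HType J)
    (z : Fin m → ℝ) (a : ℝ) (b : Fin k → ℝ) : hLift J z a b ⬝ᵥ z = z ⬝ᵥ z / 2 * a := by
  have hskew (ℓ : Fin k) : J ℓ *ᵥ z ⬝ᵥ z = 0 := by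
    rw [dotProduct_comm]; exact dotProduct_mulVec_self_eq_zero_of_transpose_eq_neg (hJ.1 ℓ) z
  simp only [hLift, add_dotProduct, smul_dotProduct, smul_eq_mul, sum_dotProduct, hskew, mul_zero,
    Finset.sum_const_zero, add_zero]
  ring

lemma hLift_dotProduct_mulVec {J : Fin k → Matrix (Fin m) (Fin m) ℝ} (hJ : HType J)
    (z : Fin m → ℝ) (a : ℝ) (b : Fin k → ℝ) (ℓ : Fin k) :
    hLift J z a b ⬝ᵥ J ℓ *ᵥ z = z ⬝ᵥ z / 2 * b ℓ := by
  simp only [hLift, add_dotProduct, smul_dotProduct, smul_eq_mul, sum_dotProduct,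
    dotProduct_mulVec_self_eq_zero_of_transpose_eq_neg (hJ.1 ℓ),
    mulVec_dotProduct_mulVec_of_hType hJ, mul_zero, mul_ite, Finset.sum_ite_eq', Finset.mem_univ,
    if_true, zero_add]
  ring

lemma hLift_dotProduct_hLift {J : Fin k → Matrix (Fin m) (Fin m) ℝ} (hJ : HType J)
    (z : Fin m → ℝ) (a c : ℝ) (b d : Fin k → ℝ) :
    hLift J z a b ⬝ᵥ hLift J z c d = z ⬝ᵥ z / 4 * (a * c + ∑ ℓ, b ℓ * d ℓ) := by
  simp only [hLift.eq_1 J z c d, dotProduct_add, dotProduct_smul, dotProduct_sum, smul_eq_mul,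
    hLift_dotProduct_self hJ, hLift_dotProduct_mulVec hJ]
  rw [mul_add, Finset.mul_sum, Finset.mul_sum]
  congr 1
  · ring
  · exact Finset.sum_congr rfl fun ℓ _ => by ring

lemma sum_hLift_apply_self (J : Fin k → Matrix (Fin m) (Fin m) ℝ) (z u : Fin m → ℝ)
    (w : Fin k → Fin m → ℝ) :
    ∑ i, hLift J z (u i) (fun ℓ => w ℓ i) i = (u ⬝ᵥ z + ∑ ℓ, w ℓ ⬝ᵥ J ℓ *ᵥ z) / 2 := by
  simp only [hLift, Pi.add_apply, Pi.smul_apply, Finset.sum_apply, smul_eq_mul, dotProduct,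
    Finset.sum_add_distrib, Finset.mul_sum, add_div, Finset.sum_div]
  rw [Finset.sum_comm]
  congr 1
  · exact Finset.sum_congr rfl fun i _ => by ring
  · exact Finset.sum_congr rfl fun ℓ _ => Finset.sum_congr rfl fun i _ => by ring

lemma ContinuousLinearMap.apply_mk_sum_smul {E F : Type*} [NormedAddCommGroup E]
    [NormedSpace ℝ E] [NormedAddCommGroup F] [NormedSpace ℝ F] {ι : Type*} [Fintype ι]
    (L : E × F →L[ℝ] ℝ) (u : E) (c : ι → ℝ) (v : ι → F) :
    L (u, ∑ ℓ, c ℓ • v ℓ) = L (u, 0) + ∑ ℓ, c ℓ * L (0, v ℓ) := by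
  have h : ((u, ∑ ℓ, c ℓ • v ℓ) : E × F) = (u, 0) + ∑ ℓ, c ℓ • ((0 : E), v ℓ) := by
    simp [Prod.ext_iff, Prod.fst_sum, Prod.snd_sum]
  rw [h, map_add, map_sum]
  simp only [map_smul, smul_eq_mul]

def hField (J : Fin k → Matrix (Fin m) (Fin m) ℝ) (i : Fin m) (x : Pt m k) : Pt m k :=
  (EuclideanSpace.single i 1, ∑ ℓ, ((1 / 2) * ∑ j, J ℓ i j * x.1 j) • EuclideanSpace.single ℓ 1)

lemma XD_eq_fderiv_hField (J : Fin k → Matrix (Fin m) (Fin m) ℝ) (F : Pt m k → ℝ) (i : Fin m)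
    (x : Pt m k) : XD J F i x = fderiv ℝ F x (hField J i x) := by
  rw [hField, ContinuousLinearMap.apply_mk_sum_smul, XD, Finset.mul_sum]
  simp only [mul_assoc]

section Derivation

variable (J : Fin k → Matrix (Fin m) (Fin m) ℝ) {F G : Pt m k → ℝ} {x : Pt m k} (i : Fin m)

lemma XD_add (hF : DifferentiableAt ℝ F x) (hG : DifferentiableAt ℝ G x) :
    XD J (fun y => F y + G y) i x = XD J F i x + XD J G i x := by
  simp only [XD_eq_fderiv_hField, fderiv_fun_add hF hG, _root_.add_apply]

lemma XD_mul (hF : DifferentiableAt ℝ F x) (hG : DifferentiableAt ℝ G x) :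
    XD J (fun y => F y * G y) i x = XD J F i x * G x + F x * XD J G i x := by
  simp only [XD_eq_fderiv_hField, fderiv_fun_mul hF hG, _root_.add_apply, _root_.smul_apply,
    smul_eq_mul]
  ring

lemma XD_const_mul (hF : DifferentiableAt ℝ F x) (c : ℝ) :
    XD J (fun y => c * F y) i x = c * XD J F i x := by
  simp only [XD_eq_fderiv_hField, fderiv_const_mul hF, _root_.smul_apply, smul_eq_mul]

lemma XD_sum {ι : Type*} [Fintype ι] {F : ι → Pt m k → ℝ} (hF : ∀ a, DifferentiableAt ℝ (F a) x) :
    XD J (fun y => ∑ a, F a y) i x = ∑ a, XD J (F a) i x := by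
  simp only [XD_eq_fderiv_hField, fderiv_fun_sum fun a _ => hF a, _root_.sum_apply]

lemma XD_rpow_const (hF : DifferentiableAt ℝ F x) (hFx : F x ≠ 0) (r : ℝ) :
    XD J (fun y => F y ^ r) i x = r * F x ^ (r - 1) * XD J F i x := by
  simp only [XD_eq_fderiv_hField, (hF.hasFDerivAt.rpow_const (Or.inl hFx)).fderiv,
    _root_.smul_apply, smul_eq_mul]

lemma XD_coord (j : Fin m) : XD J (fun y : Pt m k => y.1 j) i x = if j = i then 1 else 0 := by
  have hL : HasFDerivAt (fun y : Pt m k => y.1 j)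
      ((EuclideanSpace.proj j).comp (ContinuousLinearMap.fst ℝ _ (EuclideanSpace ℝ (Fin k)))) x :=
    ((EuclideanSpace.proj j).comp
      (ContinuousLinearMap.fst ℝ (EuclideanSpace ℝ (Fin m)) (EuclideanSpace ℝ (Fin k)))).hasFDerivAt
  simp [XD_eq_fderiv_hField, hL.fderiv, hField]

lemma XD_sum_mul_coord (c : Fin m → ℝ) : XD J (fun y : Pt m k => ∑ j, c j * y.1 j) i x = c i := by
  rw [XD_sum J i fun j => by fun_prop]
  calc ∑ j, XD J (fun y : Pt m k => c j * y.1 j) i x = ∑ j, c j * if j = i then 1 else 0 :=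
        Finset.sum_congr rfl fun j _ => by rw [XD_const_mul J i (by fun_prop), XD_coord]
    _ = c i := by simp

end Derivation

lemma XD_hLift {J : Fin k → Matrix (Fin m) (Fin m) ℝ} (hskew : ∀ ℓ, (J ℓ)ᵀ = -(J ℓ))
    {a : Pt m k → ℝ} {b : Fin k → Pt m k → ℝ} {x : Pt m k} (ha : DifferentiableAt ℝ a x)
    (hb : ∀ ℓ, DifferentiableAt ℝ (b ℓ) x) (i : Fin m) :
    XD J (fun y => hLift J y.1 (a y) (fun ℓ => b ℓ y) i) i x
      = a x / 2 + hLift J x.1 (XD J a i x) (fun ℓ => XD J (b ℓ) i x) i := by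
  have hcoord : XD J (fun y : Pt m k => y.1 i / 2) i x = 1 / 2 := by
    simpa [div_eq_inv_mul, XD_coord] using
      XD_const_mul J i (by fun_prop) 2⁻¹ (F := fun y : Pt m k => y.1 i) (x := x)
  have hrow (ℓ : Fin k) : XD J (fun y : Pt m k => ∑ j, J ℓ i j * y.1 j) i x = 0 := by
    have := congrFun (congrFun (hskew ℓ) i) i
    simp only [transpose_apply, Matrix.neg_apply] at this
    rw [XD_sum_mul_coord]
    linarith
  have hterm (ℓ : Fin k) : XD J (fun y => (∑ j, J ℓ i j * y.1 j) * b ℓ y) i x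
      = (∑ j, J ℓ i j * x.1 j) * XD J (b ℓ) i x := by
    rw [XD_mul J i (by fun_prop) (hb ℓ), hrow]
    ring
  simp only [hLift_apply]
  rw [XD_add J i, XD_mul J i, hcoord, XD_const_mul J i, XD_sum J i]
  · simp only [hterm]
    ring
  all_goals fun_prop

lemma hPLap_eq_of_hGradSq_ne_zero (J : Fin k → Matrix (Fin m) (Fin m) ℝ) (p : ℝ) {f : Pt m k → ℝ}
    {x : Pt m k} (hG : DifferentiableAt ℝ (hGradSq J f) x)
    (hX : ∀ i, DifferentiableAt ℝ (XD J f i) x) (hne : hGradSq J f x ≠ 0) :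
    hPLap J p f x = hGradSq J f x ^ ((p - 2) / 2)
      * (hLap J f x + (p - 2) * hInfLap J f x / hGradSq J f x) := by
  have hGr : DifferentiableAt ℝ (fun y => hGradSq J f y ^ ((p - 2) / 2)) x :=
    hG.rpow_const (Or.inl hne)
  have hterm (i : Fin m) :
      XD J (fun y => hGradSq J f y ^ ((p - 2) / 2) * XD J f i y) i x
        = (p - 2) / 2 * (hGradSq J f x ^ ((p - 2) / 2) / hGradSq J f x)
            * (XD J (hGradSq J f) i x * XD J f i x)
          + hGradSq J f x ^ ((p - 2) / 2) * XD J (XD J f i) i x := by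
    rw [XD_mul J i hGr (hX i), XD_rpow_const J i hG hne, Real.rpow_sub_one hne]
    ring
  rw [hPLap, Finset.sum_congr rfl fun i _ => hterm i, Finset.sum_add_distrib, ← Finset.mul_sum,
    ← Finset.mul_sum, hLap, hInfLap]
  field_simp
  ring

def xiSigma (x : Pt m k) : ℝ × EuclideanSpace ℝ (Fin k) := (‖x.1‖ ^ 2 / 4, x.2)

lemma hasFDerivAt_xiSigma (x : Pt m k) :
    HasFDerivAt xiSigma
      (((1 / 2 : ℝ) • (innerSL ℝ x.1).comp (ContinuousLinearMap.fst ℝ _ _)).prod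
        (ContinuousLinearMap.snd ℝ (EuclideanSpace ℝ (Fin m)) (EuclideanSpace ℝ (Fin k)))) x := by
  have h : xiSigma = fun y : Pt m k => (‖y.1‖ ^ 2 * 4⁻¹, y.2) := by
    ext y <;> simp [xiSigma, div_eq_mul_inv]
  rw [h]
  refine ((HasFDerivAt.norm_sq (hasFDerivAt_fst (p := x))).mul_const 4⁻¹ |>.prodMk
    hasFDerivAt_snd).congr_fderiv ?_
  ext v <;> simp; ring

lemma differentiable_xiSigma : Differentiable ℝ (xiSigma (m := m) (k := k)) :=
  fun x => (hasFDerivAt_xiSigma x).differentiableAt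

lemma XD_comp_xiSigma (J : Fin k → Matrix (Fin m) (Fin m) ℝ)
    {u : ℝ × EuclideanSpace ℝ (Fin k) → ℝ} {x : Pt m k} (hu : DifferentiableAt ℝ u (xiSigma x))
    (i : Fin m) :
    XD J (fun y => u (xiSigma y)) i x
      = hLift J x.1 (gXi u (xiSigma x)) (fun ℓ => gS u ℓ (xiSigma x)) i := by
  rw [XD_eq_fderiv_hField, fderiv_fun_comp x hu (hasFDerivAt_xiSigma x).differentiableAt,
    (hasFDerivAt_xiSigma x).fderiv, hLift_apply]
  simp only [hField, ContinuousLinearMap.comp_apply, ContinuousLinearMap.prod_apply,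
    _root_.smul_apply, ContinuousLinearMap.coe_fst', ContinuousLinearMap.coe_snd',
    coe_innerSL_apply, EuclideanSpace.inner_single_right, Real.ringHom_apply, one_mul, smul_eq_mul,
    one_div, ContinuousLinearMap.apply_mk_sum_smul]
  rw [show ((2⁻¹ * x.1 i, 0) : ℝ × EuclideanSpace ℝ (Fin k)) = (2⁻¹ * x.1 i) • ((1 : ℝ), 0) by
    simp, map_smul, smul_eq_mul, Finset.mul_sum]
  simp only [gXi, gS, mul_assoc]
  ring

section Regularity

variable {g : ℝ × EuclideanSpace ℝ (Fin k) → ℝ}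

lemma differentiable_gXi (hg : ContDiff ℝ 2 g) : Differentiable ℝ (gXi g) :=
  ((hg.fderiv_right (m := 1) (by norm_num)).clm_apply contDiff_const).differentiable one_ne_zero

lemma differentiable_gS (hg : ContDiff ℝ 2 g) (ℓ : Fin k) : Differentiable ℝ (gS g ℓ) :=
  ((hg.fderiv_right (m := 1) (by norm_num)).clm_apply contDiff_const).differentiable one_ne_zero

lemma differentiable_gGradSq (hg : ContDiff ℝ 2 g) : Differentiable ℝ (gGradSq g) := by
  have := differentiable_gXi hg
  have := differentiable_gS hg
  unfold gGradSq
  fun_prop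

end Regularity

section PartialSymmetry

variable {J : Fin k → Matrix (Fin m) (Fin m) ℝ} {g : ℝ × EuclideanSpace ℝ (Fin k) → ℝ}

lemma hGradSq_comp_xiSigma (hJ : HType J) (hg : Differentiable ℝ g) (x : Pt m k) :
    hGradSq J (fun y => g (xiSigma y)) x = ‖x.1‖ ^ 2 / 4 * gGradSq g (xiSigma x) := by
  simp only [hGradSq, gGradSq, XD_comp_xiSigma J (hg _), sq]
  rw [← dotProduct, hLift_dotProduct_hLift hJ, dotProduct_self_eq_norm_sq]
  ring

lemma differentiable_XD_comp_xiSigma (hg : ContDiff ℝ 2 g) (i : Fin m) :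
    Differentiable ℝ (XD J (fun y => g (xiSigma y)) i) := by
  have := differentiable_gXi hg
  have := differentiable_gS hg
  have := differentiable_xiSigma (m := m) (k := k)
  simp only [funext fun y => XD_comp_xiSigma J (hg.differentiable two_ne_zero (xiSigma y)) i,
    hLift_apply]
  fun_prop

lemma hLap_comp_xiSigma (hJ : HType J) (hg : ContDiff ℝ 2 g) (x : Pt m k) :
    hLap J (fun y => g (xiSigma y)) x = m / 2 * gXi g (xiSigma x)
      + ‖x.1‖ ^ 2 / 4 * (gXiXi g (xiSigma x) + gLapS g (xiSigma x)) := by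
  have hXf (i : Fin m) : XD J (fun y => g (xiSigma y)) i
      = fun y => hLift J y.1 (gXi g (xiSigma y)) (fun ℓ => gS g ℓ (xiSigma y)) i :=
    funext fun y => XD_comp_xiSigma J (hg.differentiable two_ne_zero _) i
  have hXXf (i : Fin m) : XD J (XD J (fun y => g (xiSigma y)) i) i x
      = gXi g (xiSigma x) / 2 + hLift J x.1
          (hLift J x.1 (gXi (gXi g) (xiSigma x)) (fun ℓ => gS (gXi g) ℓ (xiSigma x)) i)
          (fun ℓ => hLift J x.1 (gXi (gS g ℓ) (xiSigma x)) (fun ℓ' => gS (gS g ℓ) ℓ' (xiSigma x)) i)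
          i := by
    rw [hXf, XD_hLift hJ.1 (a := fun y => gXi g (xiSigma y)) (b := fun ℓ y => gS g ℓ (xiSigma y))
      ((differentiable_gXi hg).comp differentiable_xiSigma x)
      (fun ℓ => (differentiable_gS hg ℓ).comp differentiable_xiSigma x),
      XD_comp_xiSigma J (differentiable_gXi hg _)]
    simp only [XD_comp_xiSigma J (differentiable_gS hg _ _)]
  simp only [hLap, hXXf, Finset.sum_add_distrib, sum_hLift_apply_self, hLift_dotProduct_self hJ,
    hLift_dotProduct_mulVec hJ, dotProduct_self_eq_norm_sq, Finset.sum_const, Finset.card_univ,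
    Fintype.card_fin, nsmul_eq_mul]
  rw [← Finset.mul_sum]
  simp only [gXiXi, gLapS, gXi, gS]
  ring

lemma hInfLap_comp_xiSigma (hJ : HType J) (hg : ContDiff ℝ 2 g) (x : Pt m k) :
    hInfLap J (fun y => g (xiSigma y)) x = ‖x.1‖ ^ 2 / 4
      * (gGradSq g (xiSigma x) * gXi g (xiSigma x) / 2 + ‖x.1‖ ^ 2 / 4 * gInf g (xiSigma x)) := by
  have hG := differentiable_gGradSq hg
  have hW : fderiv ℝ (fun w => w.1 * gGradSq g w) (xiSigma x)
      = (xiSigma x).1 • fderiv ℝ (gGradSq g) (xiSigma x)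
        + gGradSq g (xiSigma x) • ContinuousLinearMap.fst ℝ ℝ (EuclideanSpace ℝ (Fin k)) := by
    rw [fderiv_fun_mul differentiableAt_fst (hG _), fderiv_fst]
  have hGf : hGradSq J (fun y => g (xiSigma y)) = fun y => (xiSigma y).1 * gGradSq g (xiSigma y) :=
    funext (hGradSq_comp_xiSigma hJ (hg.differentiable two_ne_zero))
  simp only [hInfLap, hGf,
    XD_comp_xiSigma J (u := fun w => w.1 * gGradSq g w) ((differentiable_fst.mul hG) _),
    XD_comp_xiSigma J (hg.differentiable two_ne_zero _)]
  rw [← dotProduct, hLift_dotProduct_hLift hJ, dotProduct_self_eq_norm_sq]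
  simp only [gXi, gS, hW, gInf, _root_.add_apply, _root_.smul_apply,
    ContinuousLinearMap.coe_fst', smul_eq_mul, show (xiSigma x).1 = ‖x.1‖ ^ 2 / 4 from rfl,
    add_zero, mul_zero, mul_one, mul_assoc, ← Finset.mul_sum]
  ring

end PartialSymmetry

theorem horizontal_p_laplacian_of_partial_symmetry_general
    (J : Fin k → Matrix (Fin m) (Fin m) ℝ) (hJ : HType J)
    (p : ℝ)
    (g : ℝ × EuclideanSpace ℝ (Fin k) → ℝ) (hg : ContDiff ℝ 2 g)
    (f : Pt m k → ℝ) (hf : ∀ x : Pt m k, f x = g (‖x.1‖ ^ 2 / 4, x.2))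
    (x : Pt m k) (hz : x.1 ≠ 0)
    (hgrad : gGradSq g (‖x.1‖ ^ 2 / 4, x.2) ≠ 0) :
    hPLap J p f x =
      (‖x.1‖ ^ 2 / 4) ^ (p / 2) * (gGradSq g (‖x.1‖ ^ 2 / 4, x.2)) ^ ((p - 2) / 2) *
        (gXiXi g (‖x.1‖ ^ 2 / 4, x.2)
          + (((m : ℝ) + p - 2) / (2 * (‖x.1‖ ^ 2 / 4))) * gXi g (‖x.1‖ ^ 2 / 4, x.2)
          + gLapS g (‖x.1‖ ^ 2 / 4, x.2)
          + (p - 2) * gInf g (‖x.1‖ ^ 2 / 4, x.2) / gGradSq g (‖x.1‖ ^ 2 / 4, x.2)) := by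
  obtain rfl : f = fun y => g (xiSigma y) := funext hf
  rw [show ((‖x.1‖ ^ 2 / 4, x.2) : ℝ × EuclideanSpace ℝ (Fin k)) = xiSigma x from rfl] at hgrad ⊢
  have hgd : Differentiable ℝ g := hg.differentiable two_ne_zero
  have hξ : 0 < ‖x.1‖ ^ 2 / 4 := by have := norm_pos_iff.2 hz; positivity
  have hG : 0 ≤ gGradSq g (xiSigma x) := by unfold gGradSq; positivity
  have hGd : Differentiable ℝ (hGradSq J fun y => g (xiSigma y)) := by
    rw [funext (hGradSq_comp_xiSigma hJ hgd)]
    exact (differentiable_fst.mul (differentiable_gGradSq hg)).comp differentiable_xiSigma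
  have hne : hGradSq J (fun y => g (xiSigma y)) x ≠ 0 := by
    rw [hGradSq_comp_xiSigma hJ hgd]; exact mul_ne_zero hξ.ne' hgrad
  have hpow : (‖x.1‖ ^ 2 / 4) ^ (p / 2) = (‖x.1‖ ^ 2 / 4) ^ ((p - 2) / 2) * (‖x.1‖ ^ 2 / 4) := by
    rw [← Real.rpow_add_one hξ.ne']; ring_nf
  rw [hPLap_eq_of_hGradSq_ne_zero J p (hGd x) (fun i => differentiable_XD_comp_xiSigma hg i x) hne,
    hLap_comp_xiSigma hJ hg, hInfLap_comp_xiSigma hJ hg, hGradSq_comp_xiSigma hJ hgd,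
    Real.mul_rpow hξ.le hG, hpow]
  field_simp
  ring

/-- for 1 < p < ∞ and f(z,σ) = g(|z|²/4, σ) with g of class C², at every point
with z ≠ 0 and ∇g(ξ,σ) ≠ 0, where ξ = |z|²/4,
Δ_{H,p} f = ξ^{p/2} |∇g|^{p−2} [ g_{ξξ} + ((m+p−2)/(2ξ)) g_ξ + Δ_σ g + (p−2) Δ_∞ g/|∇g|² ]. -/
theorem horizontal_p_laplacian_of_partial_symmetry
    (hm : 1 ≤ m) (hk : 1 ≤ k)
    (J : Fin k → Matrix (Fin m) (Fin m) ℝ) (hJ : HType J)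
    (p : ℝ) (hp : 1 < p)
    (g : ℝ × EuclideanSpace ℝ (Fin k) → ℝ) (hg : ContDiff ℝ 2 g)
    (f : Pt m k → ℝ) (hf : ∀ x : Pt m k, f x = g (‖x.1‖ ^ 2 / 4, x.2))
    (x : Pt m k) (hz : x.1 ≠ 0)
    (hgrad : gGradSq g (‖x.1‖ ^ 2 / 4, x.2) ≠ 0) :
    hPLap J p f x =
      (‖x.1‖ ^ 2 / 4) ^ (p / 2) * (gGradSq g (‖x.1‖ ^ 2 / 4, x.2)) ^ ((p - 2) / 2) *
        (gXiXi g (‖x.1‖ ^ 2 / 4, x.2)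
          + (((m : ℝ) + p - 2) / (2 * (‖x.1‖ ^ 2 / 4))) * gXi g (‖x.1‖ ^ 2 / 4, x.2)
          + gLapS g (‖x.1‖ ^ 2 / 4, x.2)
          + (p - 2) * gInf g (‖x.1‖ ^ 2 / 4, x.2) / gGradSq g (‖x.1‖ ^ 2 / 4, x.2)) :=
  horizontal_p_laplacian_of_partial_symmetry_general J hJ p g hg f hf x hz hgrad
end
end

section
/- Let S : ℍ → ℍ be an ℝ-linear map. Then the following are equivalent: (a) S is an isometry (|S q| = |q| for all q ∈ ℍ) and S commutes with right multiplication by each of i, j, k, i.e. S(q·ω) = S(q)·ω for all q ∈ ℍ and ω ∈ {i, j, k}; (b) there exists a quaternion u with |u| = 1 such that S(q) = u·q for all q ∈ ℍ. Consequently, for any two unit quaternions q, p there exists an ℝ-linear isometry S of ℍ commuting with right multiplication by every purely imaginary quaternion such that S(q) = p. -/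
open scoped Quaternion

/-! A linear map commuting with right multiplication by `i`, `j`, `k` satisfies `S ω = S 1 * ω`
on the basis `1, i, j, k`, hence is left multiplication by `u = S 1`, and `‖u‖ = ‖S 1‖ = 1`.
Conversely, left multiplication by a unit quaternion is isometric and commutes with all right
multiplications by associativity; left multiplication by `p * q⁻¹` sends `q` to `p`. -/

theorem QuaternionAlgebra.linearMap_apply_eq_map_one_mul {R : Type*} [CommRing R]
    {c₁ c₂ c₃ : R} (S : ℍ[R,c₁,c₂,c₃] →ₗ[R] ℍ[R,c₁,c₂,c₃])
    (hS : ∀ q, ∀ ω ∈ ({⟨0,1,0,0⟩, ⟨0,0,1,0⟩, ⟨0,0,0,1⟩} : Set ℍ[R,c₁,c₂,c₃]),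
      S (q * ω) = S q * ω) (q : ℍ[R,c₁,c₂,c₃]) :
    S q = S 1 * q := by
  suffices S = LinearMap.mulLeft R (S 1) from LinearMap.congr_fun this q
  refine (basisOneIJK c₁ c₂ c₃).ext fun n => ?_
  fin_cases n
  · simp only [basisOneIJK, Module.Basis.coe_ofEquivFun, coe_linearEquivTuple_symm,
      equivTuple_symm_apply]
    exact (mul_one (S 1)).symm
  all_goals simpa [basisOneIJK] using hS 1 _ (by simp)

/-- an ℝ-linear map S : ℍ → ℍ is an isometry commuting with right
multiplication by i, j, k iff S is left multiplication by a unit quaternion; consequently,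
for any two unit quaternions q, p there is an ℝ-linear isometry of ℍ commuting with right
multiplication by every purely imaginary quaternion and sending q to p. -/
theorem quaternion_J_invariant_isometries
    (S : ℍ[ℝ] →ₗ[ℝ] ℍ[ℝ]) :
    (((∀ q : ℍ[ℝ], ‖S q‖ = ‖q‖) ∧
        (∀ q : ℍ[ℝ], ∀ ω ∈ ({⟨0,1,0,0⟩, ⟨0,0,1,0⟩, ⟨0,0,0,1⟩} : Set ℍ[ℝ]),
          S (q * ω) = S q * ω)) ↔
      (∃ u : ℍ[ℝ], ‖u‖ = 1 ∧ ∀ q : ℍ[ℝ], S q = u * q)) ∧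
    (∀ q p : ℍ[ℝ], ‖q‖ = 1 → ‖p‖ = 1 →
      ∃ T : ℍ[ℝ] →ₗ[ℝ] ℍ[ℝ],
        (∀ x : ℍ[ℝ], ‖T x‖ = ‖x‖) ∧
        (∀ (x ω : ℍ[ℝ]), ω.re = 0 → T (x * ω) = T x * ω) ∧
        T q = p) := by
  refine ⟨⟨fun ⟨hiso, hcomm⟩ => ?_, fun ⟨u, hu, hS⟩ => ?_⟩, fun q p hq hp => ?_⟩
  · exact ⟨S 1, by simpa using hiso 1, QuaternionAlgebra.linearMap_apply_eq_map_one_mul S hcomm⟩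
  · exact ⟨fun q => by rw [hS, norm_mul, hu, one_mul], fun q ω _ => by rw [hS, hS, mul_assoc]⟩
  · have hq₀ : q ≠ 0 := norm_ne_zero_iff.mp (by simp [hq])
    exact ⟨LinearMap.mulLeft ℝ (p * q⁻¹), fun x => by simp [hp, hq],
      fun x ω _ => by simp [mul_assoc], inv_mul_cancel_right₀ hq₀ p⟩
end
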